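/- arXiv:2509.02476 — 8 statements merged into one kernel-verified Lean document; each statement's English description precedes it below -/
import Mathlib

section
/- Let d ≥ 1 and let φ : ℝ^d → ℝ be differentiable, α-strongly convex and β-smooth with 0 < α ≤ β. Then the Bregman divergence satisfies the quasi-triangle inequality: for all x, y, z ∈ ℝ^d, D_φ(x,y)^{1/2} ≤ √(β/α) · ( D_φ(x,z)^{1/2} + D_φ(z,y)^{1/2} ). -/
/-! Expanding through `z` gives `D(x,y) = D(x,z) + D(z,y) + ⟪∇φ z - ∇φ y, x - z⟫`. Smoothness and
Cauchy–Schwarz bound the cross term by `β ‖z - y‖ ‖x - z‖`, and strong convexity bounds each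
distance by `√(2/α)` times the root of the corresponding divergence, so
`D(x,y) ≤ A² + B² + 2(β/α)AB ≤ (β/α)(A + B)²` (as `β/α ≥ 1`) with `A = √D(x,z)`, `B = √D(z,y)`. -/

open scoped RealInnerProductSpace BigOperators

noncomputable def breg {d : ℕ} (φ : EuclideanSpace ℝ (Fin d) → ℝ)
    (x y : EuclideanSpace ℝ (Fin d)) : ℝ :=
  φ x - φ y - ⟪gradient φ y, x - y⟫

theorem Real.sqrt_le_sqrt_mul_add_of_le {D A B κ : ℝ} (hA : 0 ≤ A) (hB : 0 ≤ B) (hκ : 1 ≤ κ)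
    (hD : D ≤ A ^ 2 + B ^ 2 + 2 * κ * A * B) : √D ≤ √κ * (A + B) := by
  rw [← Real.sqrt_sq (by positivity : 0 ≤ A + B), ← Real.sqrt_mul (by positivity)]
  apply Real.sqrt_le_sqrt
  nlinarith [mul_nonneg (sub_nonneg.2 hκ) (add_nonneg (sq_nonneg A) (sq_nonneg B))]

section Bregman

variable {d : ℕ} {φ : EuclideanSpace ℝ (Fin d) → ℝ}

theorem breg_three_point (x y z : EuclideanSpace ℝ (Fin d)) :
    breg φ x y = breg φ x z + breg φ z y + ⟪gradient φ z - gradient φ y, x - z⟫ := by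
  simp only [breg, inner_sub_left, inner_sub_right]
  ring

variable {α : ℝ}
  (hsc : ∀ x y : EuclideanSpace ℝ (Fin d),
    φ y ≥ φ x + ⟪gradient φ x, y - x⟫ + α / 2 * ‖y - x‖ ^ 2)
include hsc

theorem half_mul_sq_norm_sub_le_breg (x y : EuclideanSpace ℝ (Fin d)) :
    α / 2 * ‖x - y‖ ^ 2 ≤ breg φ x y := by
  have := hsc y x
  simp only [breg]
  linarith

variable (hα : 0 < α)
include hα

theorem breg_nonneg (x y : EuclideanSpace ℝ (Fin d)) : 0 ≤ breg φ x y :=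
  le_trans (by positivity) (half_mul_sq_norm_sub_le_breg hsc x y)

theorem norm_sub_le_sqrt_mul_sqrt_breg (x y : EuclideanSpace ℝ (Fin d)) :
    ‖x - y‖ ≤ √(2 / α) * √(breg φ x y) := by
  have := half_mul_sq_norm_sub_le_breg hsc x y
  rw [← Real.sqrt_mul (by positivity), Real.le_sqrt (norm_nonneg _)
    (mul_nonneg (by positivity) (breg_nonneg hsc hα x y)),
    div_mul_eq_mul_div, le_div_iff₀ hα]
  linarith

end Bregman

theorem bregman_quasi_triangle_general (d : ℕ)
    (φ : EuclideanSpace ℝ (Fin d) → ℝ)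
    (α β : ℝ) (hα : 0 < α) (hαβ : α ≤ β)
    (hsc : ∀ x y : EuclideanSpace ℝ (Fin d),
      φ y ≥ φ x + ⟪gradient φ x, y - x⟫ + α / 2 * ‖y - x‖ ^ 2)
    (hβ : ∀ x y : EuclideanSpace ℝ (Fin d),
      ‖gradient φ x - gradient φ y‖ ≤ β * ‖x - y‖) :
    ∀ x y z : EuclideanSpace ℝ (Fin d),
      Real.sqrt (breg φ x y)
        ≤ Real.sqrt (β / α) * (Real.sqrt (breg φ x z) + Real.sqrt (breg φ z y)) := by
  intro x y z
  set A := √(breg φ x z)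
  set B := √(breg φ z y)
  have hcross : ⟪gradient φ z - gradient φ y, x - z⟫ ≤ 2 * (β / α) * A * B :=
    calc ⟪gradient φ z - gradient φ y, x - z⟫
        ≤ ‖gradient φ z - gradient φ y‖ * ‖x - z‖ := real_inner_le_norm _ _
      _ ≤ β * ‖z - y‖ * ‖x - z‖ := by gcongr; exact hβ z y
      _ ≤ β * (√(2 / α) * B) * (√(2 / α) * A) := by
          have hβ0 : 0 ≤ β := hα.le.trans hαβ
          gcongr
          · exact norm_sub_le_sqrt_mul_sqrt_breg hsc hα z y
          · exact norm_sub_le_sqrt_mul_sqrt_breg hsc hα x z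
      _ = 2 * (β / α) * A * B := by
          have h2α : √(2 / α) * √(2 / α) = 2 / α := Real.mul_self_sqrt (by positivity)
          linear_combination β * B * A * h2α
  apply Real.sqrt_le_sqrt_mul_add_of_le (Real.sqrt_nonneg _) (Real.sqrt_nonneg _)
    ((one_le_div hα).2 hαβ)
  rw [breg_three_point x y z, Real.sq_sqrt (breg_nonneg hsc hα x z),
    Real.sq_sqrt (breg_nonneg hsc hα z y)]
  linarith

/-- quasi-triangle inequality for the Bregman divergence of a
differentiable, `α`-strongly convex and `β`-smooth potential. -/
theorem bregman_quasi_triangle (d : ℕ) (hd : 1 ≤ d)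
    (φ : EuclideanSpace ℝ (Fin d) → ℝ) (hφ : Differentiable ℝ φ)
    (α β : ℝ) (hα : 0 < α) (hαβ : α ≤ β)
    (hsc : ∀ x y : EuclideanSpace ℝ (Fin d),
      φ y ≥ φ x + ⟪gradient φ x, y - x⟫ + α / 2 * ‖y - x‖ ^ 2)
    (hβ : ∀ x y : EuclideanSpace ℝ (Fin d),
      ‖gradient φ x - gradient φ y‖ ≤ β * ‖x - y‖) :
    ∀ x y z : EuclideanSpace ℝ (Fin d),
      Real.sqrt (breg φ x y)
        ≤ Real.sqrt (β / α) * (Real.sqrt (breg φ x z) + Real.sqrt (breg φ z y)) :=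
  bregman_quasi_triangle_general d φ α β hα hαβ hsc hβ
end

section
/- Let d ≥ 1, let φ : ℝ^d → ℝ be differentiable and strictly convex, and let Y be a random vector in ℝ^d defined on a probability space such that both Y and φ(Y) are integrable. Then for every z ∈ ℝ^d, E[ D_φ(Y, E[Y]) ] ≤ E[ D_φ(Y, z) ], and the inequality is strict whenever z ≠ E[Y]; in other words, z = E[Y] is the unique minimizer of z ↦ E[ D_φ(Y, z) ]. -/
open scoped RealInnerProductSpace BigOperators
open MeasureTheory

lemma breg_grad_le {d : ℕ} {φ : EuclideanSpace ℝ (Fin d) → ℝ} (hφ : Differentiable ℝ φ)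
    (hstrict : ∀ x y : EuclideanSpace ℝ (Fin d), x ≠ y → ∀ t : ℝ, 0 < t → t < 1 →
      φ (t • x + (1 - t) • y) < t * φ x + (1 - t) * φ y)
    (x y : EuclideanSpace ℝ (Fin d)) (hxy : x ≠ y) :
    ⟪gradient φ y, x - y⟫ ≤ φ x - φ y := by
  set v := x - y with hv
  have hc : HasDerivAt (fun t : ℝ => y + t • v) v 0 := by
    simpa using ((hasDerivAt_id (0:ℝ)).smul_const v).const_add y
  have hg : HasFDerivAt φ ((InnerProductSpace.toDual ℝ _) (gradient φ y)) y :=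
    ((hφ y).hasGradientAt).hasFDerivAt
  have hD : HasDerivAt (fun t : ℝ => φ (y + t • v)) ⟪gradient φ y, v⟫ 0 := by
    have hg' : HasFDerivAt φ ((InnerProductSpace.toDual ℝ _) (gradient φ y))
        ((fun t : ℝ => y + t • v) 0) := by simpa using hg
    have := hg'.comp_hasDerivAt 0 hc
    simpa [Function.comp_def] using this
  have hslope : Filter.Tendsto (slope (fun t : ℝ => φ (y + t • v)) 0) (nhdsWithin 0 {(0:ℝ)}ᶜ)
      (nhds ⟪gradient φ y, v⟫) := hasDerivAt_iff_tendsto_slope.mp hD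
  have hslope' : Filter.Tendsto (slope (fun t : ℝ => φ (y + t • v)) 0)
      (nhdsWithin 0 (Set.Ioi (0:ℝ))) (nhds ⟪gradient φ y, v⟫) :=
    hslope.mono_left (nhdsWithin_mono 0 (fun t ht => ne_of_gt ht))
  refine le_of_tendsto hslope' ?_
  filter_upwards [Ioo_mem_nhdsGT_of_mem (by constructor <;> norm_num :
      (0:ℝ) ∈ Set.Ico (0:ℝ) 1)] with t ht
  have h1 : φ (y + t • v) ≤ t * φ x + (1 - t) * φ y := by
    have := hstrict x y hxy t ht.1 ht.2
    have hxt : t • x + (1 - t) • y = y + t • v := by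
      rw [hv]; module
    rw [hxt] at this
    exact this.le
  have ht0 : (0:ℝ) < t := ht.1
  rw [slope_def_field]
  simp only [zero_smul, add_zero, sub_zero]
  rw [div_le_iff₀ ht0]
  nlinarith

lemma breg_pos {d : ℕ} {φ : EuclideanSpace ℝ (Fin d) → ℝ} (hφ : Differentiable ℝ φ)
    (hstrict : ∀ x y : EuclideanSpace ℝ (Fin d), x ≠ y → ∀ t : ℝ, 0 < t → t < 1 →
      φ (t • x + (1 - t) • y) < t * φ x + (1 - t) * φ y)
    (x y : EuclideanSpace ℝ (Fin d)) (hxy : x ≠ y) :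
    0 < breg φ x y := by
  set m : EuclideanSpace ℝ (Fin d) := (1/2 : ℝ) • x + (1/2 : ℝ) • y with hm
  have hmy : m ≠ y := by
    intro h
    have h3 : (1/2 : ℝ) • x = y - (1/2:ℝ) • y := by
      have h4 : (1/2 : ℝ) • x + (1/2:ℝ) • y - (1/2:ℝ) • y = y - (1/2:ℝ) • y := by
        rw [← hm, h]
      rwa [add_sub_cancel_right] at h4
    have h2 : (1/2 : ℝ) • x = (1/2 : ℝ) • y := by rw [h3]; module
    exact hxy (smul_right_injective _ (by norm_num : (1/2:ℝ) ≠ 0) h2)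
  have h1 : ⟪gradient φ y, m - y⟫ ≤ φ m - φ y := breg_grad_le hφ hstrict m y hmy
  have h2 : φ m < (1/2) * φ x + (1 - 1/2) * φ y := by
    rw [hm]
    have h := hstrict x y hxy (1/2) (by norm_num) (by norm_num)
    norm_num at h ⊢
    exact h
  have hmv : m - y = (1/2 : ℝ) • (x - y) := by rw [hm]; module
  rw [hmv, real_inner_smul_right] at h1
  unfold breg
  nlinarith

lemma integral_breg {d : ℕ} (φ : EuclideanSpace ℝ (Fin d) → ℝ)
    {Ω : Type*} [MeasurableSpace Ω] (μ : Measure Ω) [IsProbabilityMeasure μ]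
    (Y : Ω → EuclideanSpace ℝ (Fin d))
    (hY : Integrable Y μ) (hφY : Integrable (fun ω => φ (Y ω)) μ)
    (z : EuclideanSpace ℝ (Fin d)) :
    ∫ ω, breg φ (Y ω) z ∂μ
      = (∫ ω, φ (Y ω) ∂μ) - φ z - ⟪gradient φ z, (∫ ω, Y ω ∂μ) - z⟫ := by
  set g := gradient φ z with hg
  have h1 : Integrable (fun ω => ⟪g, Y ω⟫) μ := hY.const_inner g
  have h2 : Integrable (fun ω => ⟪g, Y ω⟫ - ⟪g, z⟫) μ := h1.sub (integrable_const _)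
  have h3 : Integrable (fun ω => φ z + (⟪g, Y ω⟫ - ⟪g, z⟫)) μ := (integrable_const _).add h2
  have heq : ∀ ω, breg φ (Y ω) z = φ (Y ω) - (φ z + (⟪g, Y ω⟫ - ⟪g, z⟫)) := by
    intro ω
    unfold breg
    rw [inner_sub_right]
    ring
  calc ∫ ω, breg φ (Y ω) z ∂μ
      = ∫ ω, (φ (Y ω) - (φ z + (⟪g, Y ω⟫ - ⟪g, z⟫))) ∂μ := by
        simp_rw [heq]
    _ = (∫ ω, φ (Y ω) ∂μ) - ∫ ω, (φ z + (⟪g, Y ω⟫ - ⟪g, z⟫)) ∂μ := by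
        exact integral_sub hφY h3
    _ = (∫ ω, φ (Y ω) ∂μ) - (φ z + ((∫ ω, ⟪g, Y ω⟫ ∂μ) - ⟪g, z⟫)) := by
        rw [integral_add (integrable_const _) h2,
          integral_sub h1 (integrable_const _), integral_const, integral_const]
        simp
    _ = (∫ ω, φ (Y ω) ∂μ) - φ z - ⟪g, (∫ ω, Y ω ∂μ) - z⟫ := by
        rw [integral_inner hY g, inner_sub_right]
        ring

/-- for a differentiable strictly convex `φ` and an integrable random
vector `Y` with `φ(Y)` integrable, `z = E[Y]` is the unique minimizer of
`z ↦ E[D_φ(Y, z)]`. -/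
theorem bregman_mean_minimizer (d : ℕ) (hd : 1 ≤ d)
    (φ : EuclideanSpace ℝ (Fin d) → ℝ) (hφ : Differentiable ℝ φ)
    (hstrict : ∀ x y : EuclideanSpace ℝ (Fin d), x ≠ y → ∀ t : ℝ, 0 < t → t < 1 →
      φ (t • x + (1 - t) • y) < t * φ x + (1 - t) * φ y)
    {Ω : Type*} [MeasurableSpace Ω] (μ : Measure Ω) [IsProbabilityMeasure μ]
    (Y : Ω → EuclideanSpace ℝ (Fin d))
    (hY : Integrable Y μ) (hφY : Integrable (fun ω => φ (Y ω)) μ) :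
    (∀ z : EuclideanSpace ℝ (Fin d),
      (∫ ω, breg φ (Y ω) (∫ ω', Y ω' ∂μ) ∂μ) ≤ ∫ ω, breg φ (Y ω) z ∂μ) ∧
    (∀ z : EuclideanSpace ℝ (Fin d), z ≠ (∫ ω', Y ω' ∂μ) →
      (∫ ω, breg φ (Y ω) (∫ ω', Y ω' ∂μ) ∂μ) < ∫ ω, breg φ (Y ω) z ∂μ) := by
  set m : EuclideanSpace ℝ (Fin d) := ∫ ω', Y ω' ∂μ with hm
  have key : ∀ z, ∫ ω, breg φ (Y ω) z ∂μ = (∫ ω, breg φ (Y ω) m ∂μ) + breg φ m z := by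
    intro z
    rw [integral_breg φ μ Y hY hφY z, integral_breg φ μ Y hY hφY m]
    unfold breg
    rw [sub_self, inner_zero_right]
    ring
  have hb0 : ∀ w : EuclideanSpace ℝ (Fin d), breg φ w w = 0 := by
    intro w; unfold breg; rw [sub_self w, inner_zero_right]; ring
  constructor
  · intro z
    rw [key z]
    rcases eq_or_ne m z with h | h
    · rw [← h, hb0]; simp
    · have := breg_pos hφ hstrict m z h
      linarith
  · intro z hz
    rw [key z]
    have := breg_pos hφ hstrict m z (Ne.symm hz)
    linarith
end

section
/- Let d ≥ 1, let φ : ℝ^d → ℝ be differentiable, α-strongly convex and β-smooth with 0 < α ≤ β, let X be a set, let x_1, …, x_n ∈ X be fixed inputs, and let f, g, h : X → ℝ^d. Then the empirical Bregman discrepancy satisfies L_n(f,g)^{1/2} ≤ √2 · √(β/α) · ( L_n(f,h)^{1/2} + L_n(h,g)^{1/2} ). -/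
open scoped RealInnerProductSpace BigOperators

/-- Empirical Bregman discrepancy `L_n(f,g) = (1/n) ∑ᵢ D_φ(f(xᵢ), g(xᵢ))`. -/
noncomputable def empLn {X : Type*} {d : ℕ} (φ : EuclideanSpace ℝ (Fin d) → ℝ)
    {n : ℕ} (x : Fin n → X) (f g : X → EuclideanSpace ℝ (Fin d)) : ℝ :=
  (1 / (n : ℝ)) * ∑ i, breg φ (f (x i)) (g (x i))

/-- quasi-triangle inequality for the empirical Bregman discrepancy. -/
theorem empirical_bregman_quasi_triangle (d : ℕ) (hd : 1 ≤ d)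
    (φ : EuclideanSpace ℝ (Fin d) → ℝ) (hφ : Differentiable ℝ φ)
    (α β : ℝ) (hα : 0 < α) (hαβ : α ≤ β)
    (hsc : ∀ x y : EuclideanSpace ℝ (Fin d),
      φ y ≥ φ x + ⟪gradient φ x, y - x⟫ + α / 2 * ‖y - x‖ ^ 2)
    (hβ : ∀ x y : EuclideanSpace ℝ (Fin d),
      ‖gradient φ x - gradient φ y‖ ≤ β * ‖x - y‖)
    {X : Type*} {n : ℕ} (hn : 1 ≤ n) (x : Fin n → X)
    (f g h : X → EuclideanSpace ℝ (Fin d)) :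
    Real.sqrt (empLn φ x f g)
      ≤ Real.sqrt 2 * Real.sqrt (β / α)
          * (Real.sqrt (empLn φ x f h) + Real.sqrt (empLn φ x h g)) := by
  have hβpos : 0 < β := lt_of_lt_of_le hα hαβ
  -- lower bound from strong convexity
  have lower : ∀ a b : EuclideanSpace ℝ (Fin d), α / 2 * ‖a - b‖ ^ 2 ≤ breg φ a b := by
    intro a b
    have := hsc b a
    simp only [breg]
    linarith
  have nonneg : ∀ a b : EuclideanSpace ℝ (Fin d), 0 ≤ breg φ a b := by
    intro a b
    refine le_trans ?_ (lower a b)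
    positivity
  -- upper bound from Lipschitz gradient
  have upper : ∀ a b : EuclideanSpace ℝ (Fin d), breg φ a b ≤ β * ‖a - b‖ ^ 2 := by
    intro a b
    have key : breg φ a b + breg φ b a = ⟪gradient φ a - gradient φ b, a - b⟫ := by
      simp only [breg, inner_sub_left]
      have h1 : (b - a : EuclideanSpace ℝ (Fin d)) = -(a - b) := by abel
      rw [h1, inner_neg_right]
      ring
    have cs : ⟪gradient φ a - gradient φ b, a - b⟫ ≤ β * ‖a - b‖ ^ 2 := by
      calc ⟪gradient φ a - gradient φ b, a - b⟫
          ≤ ‖gradient φ a - gradient φ b‖ * ‖a - b‖ := real_inner_le_norm _ _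
        _ ≤ (β * ‖a - b‖) * ‖a - b‖ :=
            mul_le_mul_of_nonneg_right (hβ a b) (norm_nonneg _)
        _ = β * ‖a - b‖ ^ 2 := by ring
    rw [← key] at cs
    linarith [nonneg b a]
  -- notation for the three sums
  set S0 : ℝ := ∑ i, breg φ (f (x i)) (g (x i)) with hS0
  set S1 : ℝ := ∑ i, breg φ (f (x i)) (h (x i)) with hS1
  set S2 : ℝ := ∑ i, breg φ (h (x i)) (g (x i)) with hS2
  have hS1nn : 0 ≤ S1 := Finset.sum_nonneg fun i _ => nonneg _ _
  have hS2nn : 0 ≤ S2 := Finset.sum_nonneg fun i _ => nonneg _ _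
  -- vectors of norms
  set u : EuclideanSpace ℝ (Fin n) := WithLp.toLp 2 (fun i => ‖f (x i) - h (x i)‖) with hu
  set v : EuclideanSpace ℝ (Fin n) := WithLp.toLp 2 (fun i => ‖h (x i) - g (x i)‖) with hv
  have hnormu : ‖u‖ ^ 2 = ∑ i, ‖f (x i) - h (x i)‖ ^ 2 := by
    rw [PiLp.norm_sq_eq_of_L2]
    refine Finset.sum_congr rfl fun i _ => ?_
    rw [hu]; simp [Real.norm_eq_abs, sq_abs]
  have hnormv : ‖v‖ ^ 2 = ∑ i, ‖h (x i) - g (x i)‖ ^ 2 := by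
    rw [PiLp.norm_sq_eq_of_L2]
    refine Finset.sum_congr rfl fun i _ => ?_
    rw [hv]; simp [Real.norm_eq_abs, sq_abs]
  -- S0 ≤ β * ‖u + v‖²
  have hS0le : S0 ≤ β * ‖u + v‖ ^ 2 := by
    have huv : ‖u + v‖ ^ 2 = ∑ i, (u i + v i) ^ 2 := by
      rw [PiLp.norm_sq_eq_of_L2]
      refine Finset.sum_congr rfl fun i _ => ?_
      rw [PiLp.add_apply]
      have : (0:ℝ) ≤ u i + v i := by
        rw [hu, hv]; positivity
      rw [Real.norm_eq_abs, sq_abs]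
    rw [huv, Finset.mul_sum]
    refine Finset.sum_le_sum fun i _ => ?_
    refine le_trans (upper _ _) ?_
    have htri : ‖f (x i) - g (x i)‖ ≤ u i + v i := by
      rw [hu, hv]
      calc ‖f (x i) - g (x i)‖ = ‖(f (x i) - h (x i)) + (h (x i) - g (x i))‖ := by abel_nf
        _ ≤ ‖f (x i) - h (x i)‖ + ‖h (x i) - g (x i)‖ := norm_add_le _ _
    have h2 : ‖f (x i) - g (x i)‖ ^ 2 ≤ (u i + v i) ^ 2 := by
      apply sq_le_sq' _ htri
      nlinarith [norm_nonneg (f (x i) - g (x i))]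
    nlinarith
  -- ‖u‖² ≤ (2/α) * S1, ‖v‖² ≤ (2/α) * S2
  have hule : ‖u‖ ^ 2 ≤ (2 / α) * S1 := by
    rw [hnormu, hS1, Finset.mul_sum]
    refine Finset.sum_le_sum fun i _ => ?_
    have := lower (f (x i)) (h (x i))
    rw [div_mul_eq_mul_div, le_div_iff₀ hα]
    linarith
  have hvle : ‖v‖ ^ 2 ≤ (2 / α) * S2 := by
    rw [hnormv, hS2, Finset.mul_sum]
    refine Finset.sum_le_sum fun i _ => ?_
    have := lower (h (x i)) (g (x i))
    rw [div_mul_eq_mul_div, le_div_iff₀ hα]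
    linarith
  -- sqrt versions
  have hsqrtu : ‖u‖ ≤ Real.sqrt (2 / α) * Real.sqrt S1 := by
    rw [← Real.sqrt_mul (by positivity) S1]
    rw [← Real.sqrt_sq (norm_nonneg u)]
    exact Real.sqrt_le_sqrt hule
  have hsqrtv : ‖v‖ ≤ Real.sqrt (2 / α) * Real.sqrt S2 := by
    rw [← Real.sqrt_mul (by positivity) S2]
    rw [← Real.sqrt_sq (norm_nonneg v)]
    exact Real.sqrt_le_sqrt hvle
  -- main chain: √S0 ≤ √β * ‖u+v‖ ≤ √β (‖u‖+‖v‖) ≤ √(2β/α)(√S1+√S2)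
  have hmain : Real.sqrt S0 ≤ Real.sqrt β * Real.sqrt (2 / α) * (Real.sqrt S1 + Real.sqrt S2) := by
    calc Real.sqrt S0 ≤ Real.sqrt (β * ‖u + v‖ ^ 2) := Real.sqrt_le_sqrt hS0le
      _ = Real.sqrt β * ‖u + v‖ := by
          rw [Real.sqrt_mul (le_of_lt hβpos), Real.sqrt_sq (norm_nonneg _)]
      _ ≤ Real.sqrt β * (‖u‖ + ‖v‖) := by
          apply mul_le_mul_of_nonneg_left (norm_add_le _ _) (Real.sqrt_nonneg _)
      _ ≤ Real.sqrt β * (Real.sqrt (2 / α) * Real.sqrt S1 + Real.sqrt (2 / α) * Real.sqrt S2) := by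
          apply mul_le_mul_of_nonneg_left _ (Real.sqrt_nonneg _)
          exact add_le_add hsqrtu hsqrtv
      _ = Real.sqrt β * Real.sqrt (2 / α) * (Real.sqrt S1 + Real.sqrt S2) := by ring
  -- convert to empLn
  have hnpos : (0:ℝ) < (n : ℝ) := by exact_mod_cast Nat.lt_of_lt_of_le Nat.zero_lt_one hn
  have hinv : (0:ℝ) ≤ 1 / (n : ℝ) := by positivity
  have hconst : Real.sqrt β * Real.sqrt (2 / α) = Real.sqrt 2 * Real.sqrt (β / α) := by
    rw [← Real.sqrt_mul (le_of_lt hβpos), ← Real.sqrt_mul (by norm_num : (0:ℝ) ≤ 2)]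
    ring_nf
  simp only [empLn, ← hS0, ← hS1, ← hS2]
  rw [Real.sqrt_mul hinv S0, Real.sqrt_mul hinv S1, Real.sqrt_mul hinv S2]
  calc Real.sqrt (1 / n) * Real.sqrt S0
      ≤ Real.sqrt (1 / n) * (Real.sqrt β * Real.sqrt (2 / α) * (Real.sqrt S1 + Real.sqrt S2)) :=
        mul_le_mul_of_nonneg_left hmain (Real.sqrt_nonneg _)
    _ = Real.sqrt β * Real.sqrt (2 / α) *
        (Real.sqrt (1 / n) * Real.sqrt S1 + Real.sqrt (1 / n) * Real.sqrt S2) := by ring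
    _ = Real.sqrt 2 * Real.sqrt (β / α) *
        (Real.sqrt (1 / n) * Real.sqrt S1 + Real.sqrt (1 / n) * Real.sqrt S2) := by rw [hconst]
end

section
/- Let d ≥ 1, let φ : ℝ^d → ℝ be differentiable, convex and β-smooth with β > 0, let X be a set with fixed inputs x_1, …, x_n ∈ X, let 𝒞 be a set of functions from X to ℝ^d, let f̂ : X → ℝ^d, let w̃_1, …, w̃_n ∈ ℝ^d and ε_1, …, ε_n ∈ ℝ^d, and let ρ > 0. Define the wild responses y^⋄_i := f̂(x_i) − ρ (ε_i ⊙ w̃_i) for i = 1, …, n, and suppose f^⋄ ∈ 𝒞 minimizes the wild empirical risk over 𝒞, i.e., (1/n)∑_{i=1}^n D_φ(y^⋄_i, f^⋄(x_i)) ≤ (1/n)∑_{i=1}^n D_φ(y^⋄_i, f(x_i)) for every f ∈ 𝒞. Then for every f ∈ 𝒞 with L_n(f̂, f) ≤ L_n(f̂, f^⋄), one has (1/n)∑_{i=1}^n ⟨∇φ(f̂(x_i)) − ∇φ(f(x_i)), ε_i ⊙ w̃_i⟩ ≤ (1/(nρ))∑_{i=1}^n D_φ(f̂(x_i), f^⋄(x_i))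 − (1/(nρ))∑_{i=1}^n D_φ(y^⋄_i, f^⋄(x_i)) + (βρ/n)∑_{i=1}^n ‖ε_i ⊙ w̃_i‖². -/
open scoped RealInnerProductSpace BigOperators

/-- Coordinatewise (Hadamard) product on `ℝ^d`. -/
def had {d : ℕ} (v w : EuclideanSpace ℝ (Fin d)) : EuclideanSpace ℝ (Fin d) :=
  WithLp.toLp 2 (fun i => v i * w i)

lemma inner_gradient_eq {d : ℕ} (φ : EuclideanSpace ℝ (Fin d) → ℝ)
    (a v : EuclideanSpace ℝ (Fin d)) :
    ⟪gradient φ a, v⟫ = fderiv ℝ φ a v := by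
  simp [gradient, InnerProductSpace.toDual_symm_apply]

lemma descent {d : ℕ} (φ : EuclideanSpace ℝ (Fin d) → ℝ) (hφ : Differentiable ℝ φ)
    (β : ℝ) (hβ0 : 0 < β) (hβ : ∀ x y : EuclideanSpace ℝ (Fin d),
      ‖gradient φ x - gradient φ y‖ ≤ β * ‖x - y‖)
    (a b : EuclideanSpace ℝ (Fin d)) :
    φ b - φ a - ⟪gradient φ a, b - a⟫ ≤ β * ‖b - a‖ ^ 2 := by
  set h : EuclideanSpace ℝ (Fin d) → ℝ := fun v => φ v - fderiv ℝ φ a v with hh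
  have hdiff : ∀ v, DifferentiableAt ℝ h v := fun v =>
    (hφ v).sub ((fderiv ℝ φ a).differentiable v)
  have hfd : ∀ v, fderiv ℝ h v = fderiv ℝ φ v - fderiv ℝ φ a := by
    intro v
    rw [hh, fderiv_fun_sub (hφ v) ((fderiv ℝ φ a).differentiable v),
      (fderiv ℝ φ a).fderiv]
  have hnorm : ∀ v, ‖fderiv ℝ φ v - fderiv ℝ φ a‖ = ‖gradient φ v - gradient φ a‖ := by
    intro v
    rw [show gradient φ v - gradient φ a
        = (InnerProductSpace.toDual ℝ (EuclideanSpace ℝ (Fin d))).symm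
            (fderiv ℝ φ v - fderiv ℝ φ a) by simp [gradient],
      LinearIsometryEquiv.norm_map]
  have hbound : ∀ v ∈ segment ℝ a b, ‖fderiv ℝ h v‖ ≤ β * ‖b - a‖ := by
    rintro v ⟨s, t, hs, ht, hst, rfl⟩
    rw [hfd, hnorm]
    refine (hβ _ _).trans ?_
    have : s • a + t • b - a = t • (b - a) := by
      rw [smul_sub]; rw [show s = 1 - t by linarith]; module
    rw [this, norm_smul, Real.norm_eq_abs, abs_of_nonneg ht]
    have ht1 : t ≤ 1 := by linarith
    nlinarith [norm_nonneg (b - a), mul_nonneg hβ0.le (norm_nonneg (b - a))]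
  have := Convex.norm_image_sub_le_of_norm_fderiv_le (f := h) (s := segment ℝ a b)
    (fun v _ => hdiff v) hbound (convex_segment a b) (left_mem_segment ℝ a b)
    (right_mem_segment ℝ a b)
  have hhd : h b - h a = φ b - φ a - ⟪gradient φ a, b - a⟫ := by
    simp only [hh, inner_gradient_eq, map_sub]; ring
  calc φ b - φ a - ⟪gradient φ a, b - a⟫ = h b - h a := hhd.symm
    _ ≤ ‖h b - h a‖ := le_abs_self _
    _ ≤ β * ‖b - a‖ * ‖b - a‖ := this
    _ = β * ‖b - a‖ ^ 2 := by ring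

/-- the key wild-refitting lemma with Bregman losses: the wild noise
complexity at radius `√L_n(f̂, f⋄)` is bounded by the wild optimism of `f⋄`. -/
theorem wild_noise_complexity_le_wild_optimism (d : ℕ) (hd : 1 ≤ d)
    (φ : EuclideanSpace ℝ (Fin d) → ℝ) (hφ : Differentiable ℝ φ)
    (hconv : ConvexOn ℝ Set.univ φ)
    (β : ℝ) (hβpos : 0 < β)
    (hβ : ∀ x y : EuclideanSpace ℝ (Fin d),
      ‖gradient φ x - gradient φ y‖ ≤ β * ‖x - y‖)
    {X : Type*} {n : ℕ} (hn : 1 ≤ n) (x : Fin n → X)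
    (𝒞 : Set (X → EuclideanSpace ℝ (Fin d)))
    (fhat : X → EuclideanSpace ℝ (Fin d))
    (wt ε : Fin n → EuclideanSpace ℝ (Fin d))
    (ρ : ℝ) (hρ : 0 < ρ)
    (ydia : Fin n → EuclideanSpace ℝ (Fin d))
    (hydia : ∀ i, ydia i = fhat (x i) - ρ • had (ε i) (wt i))
    (fdia : X → EuclideanSpace ℝ (Fin d)) (hfdia : fdia ∈ 𝒞)
    (hmin : ∀ f ∈ 𝒞,
      (1 / (n : ℝ)) * ∑ i, breg φ (ydia i) (fdia (x i))
        ≤ (1 / (n : ℝ)) * ∑ i, breg φ (ydia i) (f (x i))) :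
    ∀ f ∈ 𝒞, empLn φ x fhat f ≤ empLn φ x fhat fdia →
      (1 / (n : ℝ)) * ∑ i, ⟪gradient φ (fhat (x i)) - gradient φ (f (x i)),
          had (ε i) (wt i)⟫
        ≤ (1 / ((n : ℝ) * ρ)) * ∑ i, breg φ (fhat (x i)) (fdia (x i))
          - (1 / ((n : ℝ) * ρ)) * ∑ i, breg φ (ydia i) (fdia (x i))
          + (β * ρ / (n : ℝ)) * ∑ i, ‖had (ε i) (wt i)‖ ^ 2 := by
  intro f hf hL
  have hn0 : (0:ℝ) < n := by exact_mod_cast hn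
  have key : ∀ i, ρ * ⟪gradient φ (fhat (x i)) - gradient φ (f (x i)), had (ε i) (wt i)⟫
      ≤ breg φ (fhat (x i)) (f (x i)) - breg φ (ydia i) (f (x i))
        + β * ρ ^ 2 * ‖had (ε i) (wt i)‖ ^ 2 := by
    intro i
    have hd' := descent φ hφ β hβpos hβ (fhat (x i)) (ydia i)
    have h1 : ydia i - fhat (x i) = -(ρ • had (ε i) (wt i)) := by rw [hydia i]; abel
    rw [h1, inner_neg_right, real_inner_smul_right, norm_neg, norm_smul,
      Real.norm_eq_abs, abs_of_pos hρ, mul_pow] at hd'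
    simp only [breg, inner_sub_left]
    have h3 : fhat (x i) - f (x i) = (ydia i - f (x i)) + ρ • had (ε i) (wt i) := by
      rw [hydia i]; abel
    rw [h3, inner_add_right, real_inner_smul_right]
    nlinarith [hd']
  have hsum : ρ * ∑ i, ⟪gradient φ (fhat (x i)) - gradient φ (f (x i)), had (ε i) (wt i)⟫
      ≤ (∑ i, breg φ (fhat (x i)) (f (x i))) - (∑ i, breg φ (ydia i) (f (x i)))
        + β * ρ ^ 2 * ∑ i, ‖had (ε i) (wt i)‖ ^ 2 := by
    rw [Finset.mul_sum, Finset.mul_sum, ← Finset.sum_sub_distrib, ← Finset.sum_add_distrib]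
    exact Finset.sum_le_sum fun i _ => key i
  have hS1 : (∑ i, breg φ (fhat (x i)) (f (x i))) ≤ ∑ i, breg φ (fhat (x i)) (fdia (x i)) := by
    have := hL
    simp only [empLn] at this
    have h := (mul_le_mul_iff_right₀ (by positivity : (0:ℝ) < 1 / (n:ℝ))).mp this
    exact h
  have hS2 : (∑ i, breg φ (ydia i) (fdia (x i))) ≤ ∑ i, breg φ (ydia i) (f (x i)) :=
    (mul_le_mul_iff_right₀ (by positivity : (0:ℝ) < 1 / (n:ℝ))).mp (hmin f hf)
  have h4 : ρ * ∑ i, ⟪gradient φ (fhat (x i)) - gradient φ (f (x i)), had (ε i) (wt i)⟫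
      ≤ (∑ i, breg φ (fhat (x i)) (fdia (x i))) - (∑ i, breg φ (ydia i) (fdia (x i)))
        + β * ρ ^ 2 * ∑ i, ‖had (ε i) (wt i)‖ ^ 2 := by linarith
  have hnρ : (0:ℝ) < 1 / ((n:ℝ) * ρ) := by positivity
  calc (1 / (n : ℝ)) * ∑ i, ⟪gradient φ (fhat (x i)) - gradient φ (f (x i)), had (ε i) (wt i)⟫
      = (1 / ((n:ℝ) * ρ)) * (ρ * ∑ i, ⟪gradient φ (fhat (x i)) - gradient φ (f (x i)),
          had (ε i) (wt i)⟫) := by field_simp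
    _ ≤ (1 / ((n:ℝ) * ρ)) * ((∑ i, breg φ (fhat (x i)) (fdia (x i)))
          - (∑ i, breg φ (ydia i) (fdia (x i)))
          + β * ρ ^ 2 * ∑ i, ‖had (ε i) (wt i)‖ ^ 2) :=
        mul_le_mul_of_nonneg_left h4 hnρ.le
    _ = (1 / ((n : ℝ) * ρ)) * ∑ i, breg φ (fhat (x i)) (fdia (x i))
          - (1 / ((n : ℝ) * ρ)) * ∑ i, breg φ (ydia i) (fdia (x i))
          + (β * ρ / (n : ℝ)) * ∑ i, ‖had (ε i) (wt i)‖ ^ 2 := by field_simp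
end

section
/- Let d ≥ 1, let φ : ℝ^d → ℝ be differentiable, α-strongly convex and β-smooth with 0 < α ≤ β, let X be a set with fixed inputs x_1, …, x_n ∈ X, and let f̂, f_s, f_t : X → ℝ^d. Suppose L_n(f̂, f_s)^{1/2} ≤ s and L_n(f̂, f_t)^{1/2} ≤ t for real numbers s, t ≥ 0, and let a ∈ [0,1]. Then the pointwise convex combination g := a f_s + (1−a) f_t satisfies L_n(f̂, g)^{1/2} ≤ √(β/α) · ( a s + (1−a) t ). -/
open scoped RealInnerProductSpace BigOperators

lemma breg_upper_aux {d : ℕ} (φ : EuclideanSpace ℝ (Fin d) → ℝ) (hφ : Differentiable ℝ φ)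
    (β : ℝ) (hβ : ∀ x y : EuclideanSpace ℝ (Fin d),
      ‖gradient φ x - gradient φ y‖ ≤ β * ‖x - y‖)
    (x y : EuclideanSpace ℝ (Fin d)) :
    breg φ x y ≤ β / 2 * ‖x - y‖ ^ 2 := by
  set v : EuclideanSpace ℝ (Fin d) := x - y with hv
  set ψ : ℝ → ℝ :=
    fun c => φ (y + c • v) - c * ⟪gradient φ y, v⟫ - β / 2 * c ^ 2 * ‖v‖ ^ 2 with hψ
  have hγ : ∀ c : ℝ, HasDerivAt (fun c : ℝ => y + c • v) v c := by
    intro c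
    simpa using ((hasDerivAt_id c).smul_const v).const_add y
  have hderiv : ∀ c : ℝ, HasDerivAt ψ
      (⟪gradient φ (y + c • v), v⟫ - ⟪gradient φ y, v⟫ - β * c * ‖v‖ ^ 2) c := by
    intro c
    have h1 : HasDerivAt (fun c : ℝ => φ (y + c • v)) (⟪gradient φ (y + c • v), v⟫) c := by
      have := ((hφ (y + c • v)).hasGradientAt.hasFDerivAt).comp_hasDerivAt c (hγ c)
      simp [Function.comp, InnerProductSpace.toDual_apply_apply] at this ⊢
      exact this
    have h2 : HasDerivAt (fun c : ℝ => c * ⟪gradient φ y, v⟫) (⟪gradient φ y, v⟫) c := by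
      simpa using (hasDerivAt_id c).mul_const (⟪gradient φ y, v⟫)
    have h3 : HasDerivAt (fun c : ℝ => β / 2 * c ^ 2 * ‖v‖ ^ 2) (β * c * ‖v‖ ^ 2) c := by
      have := ((hasDerivAt_pow 2 c).const_mul (β / 2)).mul_const (‖v‖ ^ 2)
      exact this.congr_deriv (by rw [show (2:ℕ) - 1 = 1 from rfl]; push_cast; ring)
    exact (h1.sub h2).sub h3
  have hdiff : Differentiable ℝ ψ := fun c => (hderiv c).differentiableAt
  have hanti : AntitoneOn ψ (Set.Icc (0 : ℝ) 1) := by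
    apply antitoneOn_of_deriv_nonpos (convex_Icc 0 1) hdiff.continuous.continuousOn
      (hdiff.differentiableOn)
    intro c hc
    rw [interior_Icc] at hc
    rw [(hderiv c).deriv]
    have hip : ⟪gradient φ (y + c • v), v⟫ - ⟪gradient φ y, v⟫
        = ⟪gradient φ (y + c • v) - gradient φ y, v⟫ := (inner_sub_left _ _ _).symm
    have hcs : ⟪gradient φ (y + c • v) - gradient φ y, v⟫
        ≤ ‖gradient φ (y + c • v) - gradient φ y‖ * ‖v‖ := real_inner_le_norm _ _
    have hlip : ‖gradient φ (y + c • v) - gradient φ y‖ ≤ β * (c * ‖v‖) := by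
      have := hβ (y + c • v) y
      simpa [norm_smul, abs_of_pos hc.1] using this
    have hv0 : (0 : ℝ) ≤ ‖v‖ := norm_nonneg _
    nlinarith [hcs, hlip, mul_le_mul_of_nonneg_right hlip hv0]
  have h01 : ψ 1 ≤ ψ 0 :=
    hanti (by norm_num) (by norm_num) zero_le_one
  have hyv : y + (1 : ℝ) • v = x := by
    rw [one_smul, hv]; abel
  have e1 : ψ 1 = φ x - ⟪gradient φ y, v⟫ - β / 2 * ‖v‖ ^ 2 := by
    simp only [hψ]; rw [hyv]; ring
  have e0 : ψ 0 = φ y := by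
    simp only [hψ, zero_smul, add_zero]; ring
  rw [e1, e0] at h01
  simp only [breg, ← hv]
  linarith

/-- radii of empirical Bregman balls behave quasi-convexly under
pointwise convex combinations of predictors. -/
theorem empirical_bregman_convex_combination (d : ℕ) (hd : 1 ≤ d)
    (φ : EuclideanSpace ℝ (Fin d) → ℝ) (hφ : Differentiable ℝ φ)
    (α β : ℝ) (hα : 0 < α) (hαβ : α ≤ β)
    (hsc : ∀ x y : EuclideanSpace ℝ (Fin d),
      φ y ≥ φ x + ⟪gradient φ x, y - x⟫ + α / 2 * ‖y - x‖ ^ 2)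
    (hβ : ∀ x y : EuclideanSpace ℝ (Fin d),
      ‖gradient φ x - gradient φ y‖ ≤ β * ‖x - y‖)
    {X : Type*} {n : ℕ} (hn : 1 ≤ n) (x : Fin n → X)
    (fhat fs ft : X → EuclideanSpace ℝ (Fin d))
    (s t : ℝ) (hs : 0 ≤ s) (ht : 0 ≤ t)
    (hLs : Real.sqrt (empLn φ x fhat fs) ≤ s)
    (hLt : Real.sqrt (empLn φ x fhat ft) ≤ t)
    (a : ℝ) (ha0 : 0 ≤ a) (ha1 : a ≤ 1) :
    Real.sqrt (empLn φ x fhat (fun u => a • fs u + (1 - a) • ft u))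
      ≤ Real.sqrt (β / α) * (a * s + (1 - a) * t) := by
  have hβ0 : 0 < β := lt_of_lt_of_le hα hαβ
  have hn0 : 0 < (n : ℝ) := by exact_mod_cast hn
  -- lower bound on breg
  have hlow : ∀ u v : EuclideanSpace ℝ (Fin d), α / 2 * ‖u - v‖ ^ 2 ≤ breg φ u v := by
    intro u v
    have := hsc v u
    simp only [breg]
    linarith
  -- empirical losses are bounded: Σ pᵢ² ≤ (2n/α) s²
  have key : ∀ (f : X → EuclideanSpace ℝ (Fin d)) (r : ℝ), 0 ≤ r →
      Real.sqrt (empLn φ x fhat f) ≤ r →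
      ∑ i, ‖fhat (x i) - f (x i)‖ ^ 2 ≤ 2 * (n : ℝ) / α * r ^ 2 := by
    intro f r hr hsq
    have hL0 : 0 ≤ empLn φ x fhat f := by
      apply mul_nonneg (by positivity)
      apply Finset.sum_nonneg
      intro i _
      exact le_trans (by positivity) (hlow (fhat (x i)) (f (x i)))
    have hLr : empLn φ x fhat f ≤ r ^ 2 := by
      have := pow_le_pow_left₀ (Real.sqrt_nonneg _) hsq 2
      rwa [Real.sq_sqrt hL0] at this
    have hsum : α / 2 * ∑ i, ‖fhat (x i) - f (x i)‖ ^ 2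
        ≤ (n : ℝ) * empLn φ x fhat f := by
      rw [empLn, ← mul_assoc, mul_one_div, div_self hn0.ne', one_mul, Finset.mul_sum]
      exact Finset.sum_le_sum fun i _ => hlow _ _
    have h2 : (n : ℝ) * empLn φ x fhat f ≤ (n : ℝ) * r ^ 2 :=
      mul_le_mul_of_nonneg_left hLr hn0.le
    rw [div_mul_eq_mul_div, le_div_iff₀ hα]
    nlinarith
  have hPs := key fs s hs hLs
  have hQt := key ft t ht hLt
  -- Euclidean vectors of distances
  set P : EuclideanSpace ℝ (Fin n) := WithLp.toLp 2 (fun i => ‖fhat (x i) - fs (x i)‖) with hPdef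
  set Q : EuclideanSpace ℝ (Fin n) := WithLp.toLp 2 (fun i => ‖fhat (x i) - ft (x i)‖) with hQdef
  set W : EuclideanSpace ℝ (Fin n) := a • P + (1 - a) • Q with hWdef
  have hWnorm : ‖W‖ ≤ a * ‖P‖ + (1 - a) * ‖Q‖ := by
    calc ‖W‖ ≤ ‖a • P‖ + ‖(1 - a) • Q‖ := norm_add_le _ _
    _ = a * ‖P‖ + (1 - a) * ‖Q‖ := by
        rw [norm_smul, norm_smul, Real.norm_eq_abs, Real.norm_eq_abs,
          abs_of_nonneg ha0, abs_of_nonneg (by linarith)]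
  have hPn : ‖P‖ ≤ Real.sqrt (2 * (n : ℝ) / α) * s := by
    rw [EuclideanSpace.norm_eq]
    have : ∑ i, ‖P i‖ ^ 2 ≤ 2 * (n : ℝ) / α * s ^ 2 := by
      simpa [hPdef] using hPs
    calc Real.sqrt (∑ i, ‖P i‖ ^ 2) ≤ Real.sqrt (2 * (n : ℝ) / α * s ^ 2) :=
        Real.sqrt_le_sqrt this
    _ = Real.sqrt (2 * (n : ℝ) / α) * s := by
        rw [Real.sqrt_mul (by positivity), Real.sqrt_sq hs]
  have hQn : ‖Q‖ ≤ Real.sqrt (2 * (n : ℝ) / α) * t := by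
    rw [EuclideanSpace.norm_eq]
    have : ∑ i, ‖Q i‖ ^ 2 ≤ 2 * (n : ℝ) / α * t ^ 2 := by
      simpa [hQdef] using hQt
    calc Real.sqrt (∑ i, ‖Q i‖ ^ 2) ≤ Real.sqrt (2 * (n : ℝ) / α * t ^ 2) :=
        Real.sqrt_le_sqrt this
    _ = Real.sqrt (2 * (n : ℝ) / α) * t := by
        rw [Real.sqrt_mul (by positivity), Real.sqrt_sq ht]
  -- upper bound on the combined loss
  have hGle : empLn φ x fhat (fun u => a • fs u + (1 - a) • ft u)
      ≤ β / (2 * (n : ℝ)) * ‖W‖ ^ 2 := by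
    have hWsq : ‖W‖ ^ 2 = ∑ i, ‖W i‖ ^ 2 := by
      rw [EuclideanSpace.norm_eq, Real.sq_sqrt (Finset.sum_nonneg fun i _ => by positivity)]
    rw [empLn, hWsq]
    have hterm : ∀ i, breg φ (fhat (x i)) (a • fs (x i) + (1 - a) • ft (x i))
        ≤ β / 2 * ‖W i‖ ^ 2 := by
      intro i
      have hWi : W i = a * ‖fhat (x i) - fs (x i)‖ + (1 - a) * ‖fhat (x i) - ft (x i)‖ := by
        simp [hWdef, hPdef, hQdef]
      have hdist : ‖fhat (x i) - (a • fs (x i) + (1 - a) • ft (x i))‖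
          ≤ a * ‖fhat (x i) - fs (x i)‖ + (1 - a) * ‖fhat (x i) - ft (x i)‖ := by
        have hrw : fhat (x i) - (a • fs (x i) + (1 - a) • ft (x i))
            = a • (fhat (x i) - fs (x i)) + (1 - a) • (fhat (x i) - ft (x i)) := by
          module
        rw [hrw]
        calc ‖a • (fhat (x i) - fs (x i)) + (1 - a) • (fhat (x i) - ft (x i))‖
            ≤ ‖a • (fhat (x i) - fs (x i))‖ + ‖(1 - a) • (fhat (x i) - ft (x i))‖ :=
              norm_add_le _ _
        _ = a * ‖fhat (x i) - fs (x i)‖ + (1 - a) * ‖fhat (x i) - ft (x i)‖ := by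
            rw [norm_smul, norm_smul, Real.norm_eq_abs, Real.norm_eq_abs,
              abs_of_nonneg ha0, abs_of_nonneg (by linarith)]
      have hup := breg_upper_aux φ hφ β hβ (fhat (x i)) (a • fs (x i) + (1 - a) • ft (x i))
      have hsqle : ‖fhat (x i) - (a • fs (x i) + (1 - a) • ft (x i))‖ ^ 2
          ≤ (a * ‖fhat (x i) - fs (x i)‖ + (1 - a) * ‖fhat (x i) - ft (x i)‖) ^ 2 :=
        pow_le_pow_left₀ (norm_nonneg _) hdist 2
      have hWiabs : ‖W i‖ = a * ‖fhat (x i) - fs (x i)‖ + (1 - a) * ‖fhat (x i) - ft (x i)‖ := by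
        rw [hWi, Real.norm_eq_abs, abs_of_nonneg]
        exact add_nonneg (mul_nonneg ha0 (norm_nonneg _))
          (mul_nonneg (by linarith) (norm_nonneg _))
      rw [hWiabs]
      calc breg φ (fhat (x i)) (a • fs (x i) + (1 - a) • ft (x i))
          ≤ β / 2 * ‖fhat (x i) - (a • fs (x i) + (1 - a) • ft (x i))‖ ^ 2 := hup
      _ ≤ β / 2 * (a * ‖fhat (x i) - fs (x i)‖ + (1 - a) * ‖fhat (x i) - ft (x i)‖) ^ 2 :=
          mul_le_mul_of_nonneg_left hsqle (by positivity)
    calc (1 / (n : ℝ)) * ∑ i, breg φ (fhat (x i)) (a • fs (x i) + (1 - a) • ft (x i))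
        ≤ (1 / (n : ℝ)) * ∑ i, β / 2 * ‖W i‖ ^ 2 := by
          apply mul_le_mul_of_nonneg_left (Finset.sum_le_sum fun i _ => hterm i) (by positivity)
    _ = β / (2 * (n : ℝ)) * ∑ i, ‖W i‖ ^ 2 := by
        rw [← Finset.mul_sum]; ring
  -- put everything together
  have hsqrtG : Real.sqrt (empLn φ x fhat (fun u => a • fs u + (1 - a) • ft u))
      ≤ Real.sqrt (β / (2 * (n : ℝ))) * ‖W‖ := by
    calc Real.sqrt (empLn φ x fhat (fun u => a • fs u + (1 - a) • ft u))
        ≤ Real.sqrt (β / (2 * (n : ℝ)) * ‖W‖ ^ 2) := Real.sqrt_le_sqrt hGle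
    _ = Real.sqrt (β / (2 * (n : ℝ))) * ‖W‖ := by
        rw [Real.sqrt_mul (by positivity), Real.sqrt_sq (norm_nonneg _)]
  have hc : Real.sqrt (β / (2 * (n : ℝ))) * Real.sqrt (2 * (n : ℝ) / α)
      = Real.sqrt (β / α) := by
    rw [← Real.sqrt_mul (by positivity)]
    congr 1
    field_simp
  calc Real.sqrt (empLn φ x fhat (fun u => a • fs u + (1 - a) • ft u))
      ≤ Real.sqrt (β / (2 * (n : ℝ))) * ‖W‖ := hsqrtG
  _ ≤ Real.sqrt (β / (2 * (n : ℝ))) * (a * ‖P‖ + (1 - a) * ‖Q‖) := by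
      apply mul_le_mul_of_nonneg_left hWnorm (Real.sqrt_nonneg _)
  _ ≤ Real.sqrt (β / (2 * (n : ℝ))) *
      (a * (Real.sqrt (2 * (n : ℝ) / α) * s) + (1 - a) * (Real.sqrt (2 * (n : ℝ) / α) * t)) := by
      apply mul_le_mul_of_nonneg_left _ (Real.sqrt_nonneg _)
      have h1 := mul_le_mul_of_nonneg_left hPn ha0
      have h2 := mul_le_mul_of_nonneg_left hQn (by linarith : (0:ℝ) ≤ 1 - a)
      linarith
  _ = Real.sqrt (β / (2 * (n : ℝ))) * Real.sqrt (2 * (n : ℝ) / α) * (a * s + (1 - a) * t) := by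
      ring
  _ = Real.sqrt (β / α) * (a * s + (1 - a) * t) := by rw [hc]
end

section
/- Let d ≥ 1, let φ : ℝ^d → ℝ be differentiable, α-strongly convex and β-smooth with 0 < α ≤ β, let X be a set with fixed inputs x_1, …, x_n ∈ X, let f*, f† : X → ℝ^d, and let w̄_1, …, w̄_n ∈ ℝ^d be amplitude vectors with max_i ‖w̄_i‖_∞ ≤ W for some W ≥ 0. Define G : (ℝ^d)^n → ℝ by G(ε) := (1/n)∑_{i=1}^n ⟨(∇φ(f*(x_i)) − ∇φ(f†(x_i))) ⊙ w̄_i, ε_i⟩. Then G is Lipschitz with respect to the Frobenius norm with constant (√2 · W · β^{3/2} · √d / (α √n)) · L_n(f*, f†)^{1/2}; that is, |G(ε) − G(ε′)| ≤ (√2 W β^{3/2} √d / (α√n)) · L_n(f*, f†)^{1/2} · ‖ε − ε′‖_F for all ε, ε′ ∈ (ℝ^d)^n. -/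
open scoped RealInnerProductSpace BigOperators

lemma had_norm_le {d : ℕ} (v w : EuclideanSpace ℝ (Fin d)) (W : ℝ) (hW : 0 ≤ W)
    (hw : ∀ j, |w j| ≤ W) : ‖had v w‖ ≤ W * ‖v‖ := by
  rw [EuclideanSpace.norm_eq, EuclideanSpace.norm_eq]
  have h : ∑ j, ‖had v w j‖ ^ 2 ≤ W ^ 2 * ∑ j, ‖v j‖ ^ 2 := by
    rw [Finset.mul_sum]
    refine Finset.sum_le_sum fun j _ => ?_
    have h1 : |w j| ^ 2 ≤ W ^ 2 := by
      have := hw j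
      nlinarith [abs_nonneg (w j)]
    have h2 : ‖had v w j‖ ^ 2 = ‖v j‖ ^ 2 * |w j| ^ 2 := by
      simp only [had, PiLp.toLp_apply, Real.norm_eq_abs, abs_mul]
      ring
    rw [h2]
    nlinarith [sq_nonneg (‖v j‖)]
  calc Real.sqrt (∑ j, ‖had v w j‖ ^ 2) ≤ Real.sqrt (W ^ 2 * ∑ j, ‖v j‖ ^ 2) :=
        Real.sqrt_le_sqrt h
    _ = W * Real.sqrt (∑ j, ‖v j‖ ^ 2) := by
        rw [Real.sqrt_mul (sq_nonneg W), Real.sqrt_sq hW]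

/-- the linear functional `G` built from gradient differences and
amplitude vectors is Lipschitz in the Rademacher sign matrix with respect to the
Frobenius norm, with constant `√2 · W · β^{3/2} · √d / (α√n) · √L_n(f*, f†)`. -/
theorem G_lipschitz_frobenius (d : ℕ) (hd : 1 ≤ d)
    (φ : EuclideanSpace ℝ (Fin d) → ℝ) (hφ : Differentiable ℝ φ)
    (α β : ℝ) (hα : 0 < α) (hαβ : α ≤ β)
    (hsc : ∀ x y : EuclideanSpace ℝ (Fin d),
      φ y ≥ φ x + ⟪gradient φ x, y - x⟫ + α / 2 * ‖y - x‖ ^ 2)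
    (hβ : ∀ x y : EuclideanSpace ℝ (Fin d),
      ‖gradient φ x - gradient φ y‖ ≤ β * ‖x - y‖)
    {X : Type*} {n : ℕ} (hn : 1 ≤ n) (x : Fin n → X)
    (fstar fdag : X → EuclideanSpace ℝ (Fin d))
    (wbar : Fin n → EuclideanSpace ℝ (Fin d))
    (W : ℝ) (hW : 0 ≤ W) (hwbar : ∀ i j, |wbar i j| ≤ W) :
    ∀ ε ε' : Fin n → EuclideanSpace ℝ (Fin d),
      |((1 / (n : ℝ)) * ∑ i, ⟪had (gradient φ (fstar (x i)) - gradient φ (fdag (x i)))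
            (wbar i), ε i⟫)
        - ((1 / (n : ℝ)) * ∑ i, ⟪had (gradient φ (fstar (x i)) - gradient φ (fdag (x i)))
            (wbar i), ε' i⟫)|
      ≤ (Real.sqrt 2 * W * β ^ ((3 : ℝ) / 2) * Real.sqrt d / (α * Real.sqrt n))
          * Real.sqrt (empLn φ x fstar fdag)
          * Real.sqrt (∑ i, ‖ε i - ε' i‖ ^ 2) := by
  intro ε ε'
  have hβ0 : 0 < β := lt_of_lt_of_le hα hαβ
  have hn0 : (0 : ℝ) < n := by exact_mod_cast hn
  set u : Fin n → EuclideanSpace ℝ (Fin d) :=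
    fun i => had (gradient φ (fstar (x i)) - gradient φ (fdag (x i))) (wbar i) with hu
  set S : ℝ := ∑ i, breg φ (fstar (x i)) (fdag (x i)) with hS
  set T : ℝ := ∑ i, ‖ε i - ε' i‖ ^ 2 with hT
  have hbreg : ∀ i, α / 2 * ‖fstar (x i) - fdag (x i)‖ ^ 2
      ≤ breg φ (fstar (x i)) (fdag (x i)) := by
    intro i
    have := hsc (fdag (x i)) (fstar (x i))
    simp only [breg]
    linarith
  have hbreg0 : ∀ i, 0 ≤ breg φ (fstar (x i)) (fdag (x i)) := fun i =>
    le_trans (by positivity) (hbreg i)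
  have hS0 : 0 ≤ S := Finset.sum_nonneg fun i _ => hbreg0 i
  -- bound on ∑ ‖u i‖²
  have hsum : ∑ i, ‖u i‖ ^ 2 ≤ 2 * W ^ 2 * β ^ 2 / α * S := by
    rw [hS, Finset.mul_sum]
    refine Finset.sum_le_sum fun i _ => ?_
    have h1 : ‖u i‖ ≤ W * ‖gradient φ (fstar (x i)) - gradient φ (fdag (x i))‖ :=
      had_norm_le _ _ W hW (hwbar i)
    have h2 : ‖gradient φ (fstar (x i)) - gradient φ (fdag (x i))‖
        ≤ β * ‖fstar (x i) - fdag (x i)‖ := hβ _ _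
    have h3 := hbreg i
    have h4 : ‖u i‖ ≤ W * (β * ‖fstar (x i) - fdag (x i)‖) :=
      h1.trans (by nlinarith [norm_nonneg (fstar (x i) - fdag (x i)),
        norm_nonneg (gradient φ (fstar (x i)) - gradient φ (fdag (x i)))])
    have h5 : ‖u i‖ ^ 2 ≤ (W * (β * ‖fstar (x i) - fdag (x i)‖)) ^ 2 := by
      nlinarith [norm_nonneg (u i), norm_nonneg (fstar (x i) - fdag (x i))]
    calc ‖u i‖ ^ 2 ≤ W ^ 2 * β ^ 2 * ‖fstar (x i) - fdag (x i)‖ ^ 2 := by nlinarith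
      _ ≤ 2 * W ^ 2 * β ^ 2 / α * breg φ (fstar (x i)) (fdag (x i)) := by
          rw [div_mul_eq_mul_div, le_div_iff₀ hα]
          nlinarith [mul_le_mul_of_nonneg_left h3
            (by positivity : (0:ℝ) ≤ 2 * W ^ 2 * β ^ 2)]
  -- Cauchy–Schwarz step
  have key : |((1 / (n : ℝ)) * ∑ i, ⟪u i, ε i⟫) - ((1 / (n : ℝ)) * ∑ i, ⟪u i, ε' i⟫)|
      ≤ (1 / (n : ℝ)) * (Real.sqrt (∑ i, ‖u i‖ ^ 2) * Real.sqrt T) := by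
    rw [← mul_sub, ← Finset.sum_sub_distrib, abs_mul,
      abs_of_nonneg (by positivity : (0:ℝ) ≤ 1 / (n:ℝ))]
    have e1 : ∀ i : Fin n, ⟪u i, ε i⟫ - ⟪u i, ε' i⟫ = ⟪u i, ε i - ε' i⟫ := fun i =>
      (inner_sub_right _ _ _).symm
    simp_rw [e1]
    refine mul_le_mul_of_nonneg_left ?_ (by positivity)
    calc |∑ i, ⟪u i, ε i - ε' i⟫| ≤ ∑ i, |⟪u i, ε i - ε' i⟫| :=
          Finset.abs_sum_le_sum_abs _ _
      _ ≤ ∑ i, ‖u i‖ * ‖ε i - ε' i‖ :=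
          Finset.sum_le_sum fun i _ => abs_real_inner_le_norm _ _
      _ ≤ Real.sqrt (∑ i, ‖u i‖ ^ 2) * Real.sqrt (∑ i, ‖ε i - ε' i‖ ^ 2) :=
          Real.sum_mul_le_sqrt_mul_sqrt _ _ _
  refine key.trans ?_
  have hempLn : empLn φ x fstar fdag = S / n := by
    rw [empLn, ← hS, one_div, inv_mul_eq_div]
  rw [hempLn, Real.sqrt_div hS0]
  -- sqrt of the sum bound
  have hsq : 2 * W ^ 2 * β ^ 2 / α = (Real.sqrt 2 * W * β / Real.sqrt α) ^ 2 := by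
    rw [div_pow, mul_pow, mul_pow, Real.sq_sqrt (by norm_num : (0:ℝ) ≤ 2),
      Real.sq_sqrt hα.le]
  have hsqrtsum : Real.sqrt (∑ i, ‖u i‖ ^ 2)
      ≤ Real.sqrt 2 * W * β / Real.sqrt α * Real.sqrt S := by
    calc Real.sqrt (∑ i, ‖u i‖ ^ 2) ≤ Real.sqrt (2 * W ^ 2 * β ^ 2 / α * S) :=
          Real.sqrt_le_sqrt hsum
      _ = Real.sqrt 2 * W * β / Real.sqrt α * Real.sqrt S := by
          rw [hsq, Real.sqrt_mul (sq_nonneg _), Real.sqrt_sq (by positivity)]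
  have h32 : β ^ ((3 : ℝ) / 2) = β * Real.sqrt β := by
    rw [show ((3:ℝ)/2) = 1 + 1/2 by norm_num, Real.rpow_add hβ0, Real.rpow_one,
      ← Real.sqrt_eq_rpow]
  rw [h32]
  have hsn : Real.sqrt n ≠ 0 := by positivity
  have hnn : Real.sqrt n * Real.sqrt n = (n : ℝ) := Real.mul_self_sqrt hn0.le
  have hc : Real.sqrt 2 * W * β / Real.sqrt α / n
      ≤ Real.sqrt 2 * W * (β * Real.sqrt β) * Real.sqrt d / (α * n) := by
    have hsa : (0:ℝ) < Real.sqrt α := Real.sqrt_pos.2 hα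
    have e : Real.sqrt 2 * W * β / Real.sqrt α / n
        = Real.sqrt 2 * W * β * Real.sqrt α / (α * n) := by
      rw [show α = Real.sqrt α * Real.sqrt α from (Real.mul_self_sqrt hα.le).symm]
      field_simp
      rw [Real.sqrt_sq hsa.le]
    rw [e]
    have h1 : Real.sqrt α ≤ Real.sqrt β * Real.sqrt d := by
      calc Real.sqrt α ≤ Real.sqrt β := Real.sqrt_le_sqrt hαβ
        _ = Real.sqrt β * 1 := (mul_one _).symm
        _ ≤ Real.sqrt β * Real.sqrt d := by
            refine mul_le_mul_of_nonneg_left ?_ (Real.sqrt_nonneg β)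
            rw [Real.one_le_sqrt]
            exact_mod_cast hd
    calc Real.sqrt 2 * W * β * Real.sqrt α / (α * n)
        ≤ Real.sqrt 2 * W * β * (Real.sqrt β * Real.sqrt d) / (α * n) := by
          gcongr
      _ = Real.sqrt 2 * W * (β * Real.sqrt β) * Real.sqrt d / (α * n) := by ring
  calc (1 / (n : ℝ)) * (Real.sqrt (∑ i, ‖u i‖ ^ 2) * Real.sqrt T)
      ≤ (1 / (n : ℝ)) * ((Real.sqrt 2 * W * β / Real.sqrt α * Real.sqrt S) * Real.sqrt T) := by
        gcongr
    _ = (Real.sqrt 2 * W * β / Real.sqrt α / n) * (Real.sqrt S * Real.sqrt T) := by ring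
    _ ≤ (Real.sqrt 2 * W * (β * Real.sqrt β) * Real.sqrt d / (α * n))
          * (Real.sqrt S * Real.sqrt T) :=
        mul_le_mul_of_nonneg_right hc (by positivity)
    _ = Real.sqrt 2 * W * (β * Real.sqrt β) * Real.sqrt d / (α * Real.sqrt n)
          * (Real.sqrt S / Real.sqrt n) * Real.sqrt T := by
        field_simp
        rw [Real.sq_sqrt hn0.le]
        ring
end

section
/- Let d ≥ 1, let φ : ℝ^d → ℝ be differentiable, convex and β-smooth with β > 0, let X be a set with fixed inputs x_1, …, x_n ∈ X, let 𝒞 be a set of functions from X to ℝ^d, let f̂, f* : X → ℝ^d, let w̃_1, …, w̃_n ∈ ℝ^d, ε_1, …, ε_n ∈ ℝ^d, and ρ > 0. Define w_i := w̃_i + (f̂(x_i) − f*(x_i)), and the wild responses y^⋄_i := f̂(x_i) − ρ (ε_i ⊙ w̃_i), and suppose f^⋄ ∈ 𝒞 minimizes (1/n)∑_{i=1}^n D_φ(y^⋄_i, f(x_i)) over f ∈ 𝒞. Let B := { f ∈ 𝒞 : L_n(f̂, f) ≤ L_n(f̂, f^⋄) }, and suppose the set A := { (1/n)∑_{i=1}^n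 ⟨∇φ(f̂(x_i)) − ∇φ(f(x_i)), ε_i ⊙ (f̂(x_i) − f*(x_i))⟩ : f ∈ B } is bounded above. Then for every f ∈ B, (1/n)∑_{i=1}^n ⟨∇φ(f̂(x_i)) − ∇φ(f(x_i)), ε_i ⊙ w_i⟩ ≤ [ (1/(nρ))∑_{i=1}^n D_φ(f̂(x_i), f^⋄(x_i)) − (1/(nρ))∑_{i=1}^n D_φ(y^⋄_i, f^⋄(x_i)) + (βρ/n)∑_{i=1}^n ‖ε_i ⊙ w̃_i‖² ] + sup A. -/
open scoped RealInnerProductSpace BigOperators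

lemma grad_inner_le {d : ℕ} {φ : EuclideanSpace ℝ (Fin d) → ℝ} (hφ : Differentiable ℝ φ)
    (hconv : ConvexOn ℝ Set.univ φ) (y a : EuclideanSpace ℝ (Fin d)) :
    ⟪gradient φ y, a - y⟫ ≤ φ a - φ y := by
  set g : ℝ → ℝ := fun t => φ (y + t • (a - y)) with hg
  have hgconv : ConvexOn ℝ Set.univ g := by
    have := hconv.comp_affineMap (AffineMap.lineMap y a)
    rw [Set.preimage_univ] at this
    have hgeq : g = φ ∘ AffineMap.lineMap y a := by
      funext t
      simp [g, Function.comp, AffineMap.lineMap_apply_module', add_comm]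
    rw [hgeq]; exact this
  have h2 : HasDerivAt (fun t : ℝ => y + t • (a - y)) (a - y) 0 := by
    simpa using ((hasDerivAt_id (0:ℝ)).smul_const (a - y)).const_add y
  have h1 : HasFDerivAt φ (InnerProductSpace.toDual ℝ _ (gradient φ y))
      ((fun t : ℝ => y + t • (a - y)) 0) := by
    simpa using hasGradientAt_iff_hasFDerivAt.mp (hφ y).hasGradientAt
  have hder : HasDerivAt g (⟪gradient φ y, a - y⟫) 0 := by
    have := h1.comp_hasDerivAt 0 h2
    simp only [InnerProductSpace.toDual_apply_apply] at this
    exact this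
  have hs := hgconv.le_slope_of_hasDerivAt (Set.mem_univ 0) (Set.mem_univ 1) one_pos hder
  have hslope : slope g 0 1 = φ a - φ y := by
    simp [slope_def_field, g]
  linarith [hslope ▸ hs]

/-- the intermediate wild noise complexity is bounded by the wild
optimism plus the pilot error term `sup A`. -/
theorem intermediate_complexity_le_wild_optimism_plus_pilot (d : ℕ) (hd : 1 ≤ d)
    (φ : EuclideanSpace ℝ (Fin d) → ℝ) (hφ : Differentiable ℝ φ)
    (hconv : ConvexOn ℝ Set.univ φ)
    (β : ℝ) (hβpos : 0 < β)
    (hβ : ∀ x y : EuclideanSpace ℝ (Fin d),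
      ‖gradient φ x - gradient φ y‖ ≤ β * ‖x - y‖)
    {X : Type*} {n : ℕ} (hn : 1 ≤ n) (x : Fin n → X)
    (𝒞 : Set (X → EuclideanSpace ℝ (Fin d)))
    (fhat fstar : X → EuclideanSpace ℝ (Fin d))
    (wt ε : Fin n → EuclideanSpace ℝ (Fin d))
    (ρ : ℝ) (hρ : 0 < ρ)
    (w : Fin n → EuclideanSpace ℝ (Fin d))
    (hw : ∀ i, w i = wt i + (fhat (x i) - fstar (x i)))
    (ydia : Fin n → EuclideanSpace ℝ (Fin d))
    (hydia : ∀ i, ydia i = fhat (x i) - ρ • had (ε i) (wt i))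
    (fdia : X → EuclideanSpace ℝ (Fin d)) (hfdia : fdia ∈ 𝒞)
    (hmin : ∀ f ∈ 𝒞,
      (1 / (n : ℝ)) * ∑ i, breg φ (ydia i) (fdia (x i))
        ≤ (1 / (n : ℝ)) * ∑ i, breg φ (ydia i) (f (x i)))
    (B : Set (X → EuclideanSpace ℝ (Fin d)))
    (hB : B = {f ∈ 𝒞 | empLn φ x fhat f ≤ empLn φ x fhat fdia})
    (A : Set ℝ)
    (hA : A = (fun f : X → EuclideanSpace ℝ (Fin d) =>
      (1 / (n : ℝ)) * ∑ i, ⟪gradient φ (fhat (x i)) - gradient φ (f (x i)),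
        had (ε i) (fhat (x i) - fstar (x i))⟫) '' B)
    (hAbdd : BddAbove A) :
    ∀ f ∈ B,
      (1 / (n : ℝ)) * ∑ i, ⟪gradient φ (fhat (x i)) - gradient φ (f (x i)),
          had (ε i) (w i)⟫
        ≤ ((1 / ((n : ℝ) * ρ)) * ∑ i, breg φ (fhat (x i)) (fdia (x i))
            - (1 / ((n : ℝ) * ρ)) * ∑ i, breg φ (ydia i) (fdia (x i))
            + (β * ρ / (n : ℝ)) * ∑ i, ‖had (ε i) (wt i)‖ ^ 2)
          + sSup A := by
  intro f hf
  have hnpos : (0:ℝ) < n := by exact_mod_cast Nat.lt_of_lt_of_le Nat.zero_lt_one hn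
  have hinv : (0:ℝ) < 1 / n := by positivity
  have hf𝒞 : f ∈ 𝒞 := by rw [hB] at hf; exact hf.1
  have hfL : empLn φ x fhat f ≤ empLn φ x fhat fdia := by rw [hB] at hf; exact hf.2
  have had_add : ∀ i, had (ε i) (w i)
      = had (ε i) (wt i) + had (ε i) (fhat (x i) - fstar (x i)) := by
    intro i; rw [hw i]; ext j; simp [had, mul_add]
  have hsum : (1 / (n:ℝ)) * ∑ i, ⟪gradient φ (fhat (x i)) - gradient φ (f (x i)),
        had (ε i) (w i)⟫
      = (1 / (n:ℝ)) * ∑ i, ⟪gradient φ (fhat (x i)) - gradient φ (f (x i)),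
          had (ε i) (wt i)⟫
        + (1 / (n:ℝ)) * ∑ i, ⟪gradient φ (fhat (x i)) - gradient φ (f (x i)),
          had (ε i) (fhat (x i) - fstar (x i))⟫ := by
    rw [← mul_add, ← Finset.sum_add_distrib]
    congr 1
    refine Finset.sum_congr rfl fun i _ => ?_
    rw [had_add i, inner_add_right]
  have h2 : (1 / (n:ℝ)) * ∑ i, ⟪gradient φ (fhat (x i)) - gradient φ (f (x i)),
      had (ε i) (fhat (x i) - fstar (x i))⟫ ≤ sSup A :=
    le_csSup hAbdd (by rw [hA]; exact ⟨f, hf, rfl⟩)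
  -- pointwise identity for the wt-part
  have key : ∀ i, ⟪gradient φ (fhat (x i)) - gradient φ (f (x i)), had (ε i) (wt i)⟫
      = (breg φ (ydia i) (fhat (x i)) - breg φ (ydia i) (f (x i))
          + breg φ (fhat (x i)) (f (x i))) / ρ := by
    intro i
    have e1 : ydia i - fhat (x i) = -(ρ • had (ε i) (wt i)) := by rw [hydia i]; abel
    have e2 : ydia i - f (x i) = (fhat (x i) - f (x i)) - ρ • had (ε i) (wt i) := by
      rw [hydia i]; abel
    simp only [breg, e1, e2, inner_sub_left, inner_sub_right, inner_neg_right,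
      real_inner_smul_right]
    field_simp
    ring
  have hQ : ∑ i, breg φ (ydia i) (fdia (x i)) ≤ ∑ i, breg φ (ydia i) (f (x i)) :=
    (mul_le_mul_iff_right₀ hinv).mp (hmin f hf𝒞)
  have hR : ∑ i, breg φ (fhat (x i)) (f (x i))
      ≤ ∑ i, breg φ (fhat (x i)) (fdia (x i)) := by
    have := hfL; rw [empLn, empLn] at this
    exact (mul_le_mul_iff_right₀ hinv).mp this
  have hP : ∑ i, breg φ (ydia i) (fhat (x i))
      ≤ β * ρ ^ 2 * ∑ i, ‖had (ε i) (wt i)‖ ^ 2 := by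
    rw [Finset.mul_sum]
    refine Finset.sum_le_sum fun i _ => ?_
    have hid : breg φ (ydia i) (fhat (x i)) + breg φ (fhat (x i)) (ydia i)
        = ⟪gradient φ (ydia i) - gradient φ (fhat (x i)), ydia i - fhat (x i)⟫ := by
      simp only [breg, inner_sub_left, inner_sub_right]; ring
    have h0 : 0 ≤ breg φ (fhat (x i)) (ydia i) := by
      have := grad_inner_le hφ hconv (ydia i) (fhat (x i))
      simp only [breg]; linarith
    have hnorm : ‖ydia i - fhat (x i)‖ = ρ * ‖had (ε i) (wt i)‖ := by
      have e1 : ydia i - fhat (x i) = -(ρ • had (ε i) (wt i)) := by rw [hydia i]; abel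
      rw [e1, norm_neg, norm_smul, Real.norm_eq_abs, abs_of_pos hρ]
    have hcs : ⟪gradient φ (ydia i) - gradient φ (fhat (x i)), ydia i - fhat (x i)⟫
        ≤ ‖gradient φ (ydia i) - gradient φ (fhat (x i))‖ * ‖ydia i - fhat (x i)‖ :=
      real_inner_le_norm _ _
    have hb : ‖gradient φ (ydia i) - gradient φ (fhat (x i))‖ * ‖ydia i - fhat (x i)‖
        ≤ (β * ‖ydia i - fhat (x i)‖) * ‖ydia i - fhat (x i)‖ :=
      mul_le_mul_of_nonneg_right (hβ _ _) (norm_nonneg _)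
    have : (β * ‖ydia i - fhat (x i)‖) * ‖ydia i - fhat (x i)‖
        = β * ρ ^ 2 * ‖had (ε i) (wt i)‖ ^ 2 := by rw [hnorm]; ring
    linarith
  have hS1 : (1 / (n:ℝ)) * ∑ i, ⟪gradient φ (fhat (x i)) - gradient φ (f (x i)),
        had (ε i) (wt i)⟫
      ≤ (1 / ((n : ℝ) * ρ)) * ∑ i, breg φ (fhat (x i)) (fdia (x i))
        - (1 / ((n : ℝ) * ρ)) * ∑ i, breg φ (ydia i) (fdia (x i))
        + (β * ρ / (n : ℝ)) * ∑ i, ‖had (ε i) (wt i)‖ ^ 2 := by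
    have hrw : ∑ i, ⟪gradient φ (fhat (x i)) - gradient φ (f (x i)), had (ε i) (wt i)⟫
        = (∑ i, breg φ (ydia i) (fhat (x i)) - ∑ i, breg φ (ydia i) (f (x i))
            + ∑ i, breg φ (fhat (x i)) (f (x i))) / ρ := by
      rw [Finset.sum_congr rfl fun i _ => key i, ← Finset.sum_div,
        Finset.sum_add_distrib, Finset.sum_sub_distrib]
    rw [hrw]
    set P := ∑ i, breg φ (ydia i) (fhat (x i))
    set Q := ∑ i, breg φ (ydia i) (f (x i))
    set Qd := ∑ i, breg φ (ydia i) (fdia (x i))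
    set R := ∑ i, breg φ (fhat (x i)) (f (x i))
    set Rd := ∑ i, breg φ (fhat (x i)) (fdia (x i))
    set W := ∑ i, ‖had (ε i) (wt i)‖ ^ 2
    have hnρ : 0 < (n:ℝ) * ρ := mul_pos hnpos hρ
    have e : (1 / (n:ℝ)) * ((P - Q + R) / ρ) = (P - Q + R) / ((n:ℝ) * ρ) := by
      field_simp
    have e2 : (1 / ((n:ℝ) * ρ)) * Rd - (1 / ((n:ℝ) * ρ)) * Qd + (β * ρ / (n:ℝ)) * W
        = (β * ρ ^ 2 * W - Qd + Rd) / ((n:ℝ) * ρ) := by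
      field_simp; ring
    rw [e, e2]
    gcongr ?_ / _
    linarith
  rw [hsum]
  exact add_le_add hS1 h2
end

section
/- Let d ≥ 1, let φ : ℝ^d → ℝ be differentiable, α-strongly convex and β-smooth with 0 < α ≤ β, let X be a set with fixed inputs x_1, …, x_n ∈ X, let f† : X → ℝ^d, let ℱ be a nonempty set of functions from X to ℝ^d containing f†, and let w̄_1, …, w̄_n ∈ ℝ^d with max_i ‖w̄_i‖_∞ ≤ W for some W ≥ 0. Fix r > 0 and let B_r := { f ∈ ℱ : L_n(f†, f) ≤ r² }. For ε = (ε_1, …, ε_n) ∈ (ℝ^d)^n define H(ε) := sup_{f ∈ B_r} (1/n)∑_{i=1}^n ⟨(∇φ(f†(x_i)) − ∇φ(f(x_i))) ⊙ w̄_i, ε_i⟩, and assume this supremum is finite for every ε. Then H is Lipschitz with respect to the Frobenius norm with constant √2 W β^{3/2} √d r / (α√n); that is, |H(ε) − H(ε′)| ≤ (√2 W β^{3/2} √d r / (α√n)) ‖ε − ε′‖_F for all ε, ε′ ∈ (ℝ^d)^n. -/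
open scoped RealInnerProductSpace BigOperators

set_option maxHeartbeats 1000000 in
/-- the supremum `H(ε)` of the localized empirical process over the
empirical Bregman ball of radius `r` is Lipschitz in the sign matrix `ε` with
respect to the Frobenius norm, with constant `√2 W β^{3/2} √d r / (α√n)`. -/
theorem sup_process_lipschitz_frobenius (d : ℕ) (hd : 1 ≤ d)
    (φ : EuclideanSpace ℝ (Fin d) → ℝ) (hφ : Differentiable ℝ φ)
    (α β : ℝ) (hα : 0 < α) (hαβ : α ≤ β)
    (hsc : ∀ x y : EuclideanSpace ℝ (Fin d),
      φ y ≥ φ x + ⟪gradient φ x, y - x⟫ + α / 2 * ‖y - x‖ ^ 2)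
    (hβ : ∀ x y : EuclideanSpace ℝ (Fin d),
      ‖gradient φ x - gradient φ y‖ ≤ β * ‖x - y‖)
    {X : Type*} {n : ℕ} (hn : 1 ≤ n) (x : Fin n → X)
    (fdag : X → EuclideanSpace ℝ (Fin d))
    (F : Set (X → EuclideanSpace ℝ (Fin d))) (hFne : F.Nonempty) (hfdagF : fdag ∈ F)
    (wbar : Fin n → EuclideanSpace ℝ (Fin d))
    (W : ℝ) (hW : 0 ≤ W) (hwbar : ∀ i j, |wbar i j| ≤ W)
    (r : ℝ) (hr : 0 < r)
    (Br : Set (X → EuclideanSpace ℝ (Fin d)))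
    (hBr : Br = {f ∈ F | empLn φ x fdag f ≤ r ^ 2})
    (H : (Fin n → EuclideanSpace ℝ (Fin d)) → ℝ)
    (hH : ∀ ε, H ε = sSup ((fun f : X → EuclideanSpace ℝ (Fin d) =>
      (1 / (n : ℝ)) * ∑ i, ⟪had (gradient φ (fdag (x i)) - gradient φ (f (x i)))
        (wbar i), ε i⟫) '' Br))
    (hbdd : ∀ ε : Fin n → EuclideanSpace ℝ (Fin d), BddAbove ((fun f : X → EuclideanSpace ℝ (Fin d) =>
      (1 / (n : ℝ)) * ∑ i, ⟪had (gradient φ (fdag (x i)) - gradient φ (f (x i)))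
        (wbar i), ε i⟫) '' Br)) :
    ∀ ε ε' : Fin n → EuclideanSpace ℝ (Fin d),
      |H ε - H ε'|
        ≤ (Real.sqrt 2 * W * β ^ ((3 : ℝ) / 2) * Real.sqrt d * r / (α * Real.sqrt n))
            * Real.sqrt (∑ i, ‖ε i - ε' i‖ ^ 2) := by
  have hβ0 : (0:ℝ) < β := hα.trans_le hαβ
  have hn0 : (0:ℝ) < n := by exact_mod_cast hn
  have hd0 : (1:ℝ) ≤ d := by exact_mod_cast hd
  intro ε ε'
  set C : ℝ := Real.sqrt 2 * W * β ^ ((3 : ℝ) / 2) * Real.sqrt d * r / (α * Real.sqrt n)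
    with hCdef
  have hC0 : 0 ≤ C := by
    apply div_nonneg _ (by positivity)
    have : (0:ℝ) ≤ β ^ ((3:ℝ)/2) := Real.rpow_nonneg hβ0.le _
    positivity
  -- value of C squared
  have hC2 : C ^ 2 = 2 * W ^ 2 * β ^ 3 * (d : ℝ) * r ^ 2 / (α ^ 2 * n) := by
    have h32 : (β ^ ((3:ℝ)/2)) ^ 2 = β ^ 3 := by
      rw [← Real.rpow_natCast (β ^ ((3:ℝ)/2)) 2, ← Real.rpow_mul hβ0.le]
      norm_num
    rw [hCdef, div_pow]
    rw [mul_pow, mul_pow, mul_pow, mul_pow, mul_pow, h32,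
      Real.sq_sqrt (by norm_num : (0:ℝ) ≤ 2),
      Real.sq_sqrt (by positivity : (0:ℝ) ≤ (d:ℝ)),
      Real.sq_sqrt hn0.le]
  -- Key per-function Lipschitz estimate
  have key : ∀ f ∈ Br, ∀ a b : Fin n → EuclideanSpace ℝ (Fin d),
      (1 / (n : ℝ)) * ∑ i, ⟪had (gradient φ (fdag (x i)) - gradient φ (f (x i))) (wbar i), a i⟫
        - (1 / (n : ℝ)) * ∑ i, ⟪had (gradient φ (fdag (x i)) - gradient φ (f (x i))) (wbar i), b i⟫
        ≤ C * Real.sqrt (∑ i, ‖a i - b i‖ ^ 2) := by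
    intro f hf a b
    set v : Fin n → EuclideanSpace ℝ (Fin d) :=
      fun i => had (gradient φ (fdag (x i)) - gradient φ (f (x i))) (wbar i) with hv
    -- bound on sum of squared distances from membership in Br
    have hfBr : empLn φ x fdag f ≤ r ^ 2 := by rw [hBr] at hf; exact hf.2
    have hS : ∑ i, breg φ (fdag (x i)) (f (x i)) ≤ n * r ^ 2 := by
      unfold empLn at hfBr
      rw [one_div, inv_mul_eq_div, div_le_iff₀ hn0] at hfBr
      linarith
    have hbreg : ∀ i, α / 2 * ‖fdag (x i) - f (x i)‖ ^ 2 ≤ breg φ (fdag (x i)) (f (x i)) := by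
      intro i
      have h := hsc (f (x i)) (fdag (x i))
      unfold breg
      linarith
    have hsum : ∑ i, ‖fdag (x i) - f (x i)‖ ^ 2 ≤ 2 * (n * r ^ 2) / α := by
      have h2 : α / 2 * ∑ i, ‖fdag (x i) - f (x i)‖ ^ 2 ≤ (n : ℝ) * r ^ 2 := by
        rw [Finset.mul_sum]
        exact le_trans (Finset.sum_le_sum fun i _ => hbreg i) hS
      rw [le_div_iff₀ hα]
      linarith
    -- bound on each ‖v i‖²
    have hvnorm : ∀ i, ‖v i‖ ^ 2 ≤ W ^ 2 * β ^ 2 * ‖fdag (x i) - f (x i)‖ ^ 2 := by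
      intro i
      set u : EuclideanSpace ℝ (Fin d) := gradient φ (fdag (x i)) - gradient φ (f (x i)) with hu
      have hgd : ‖u‖ ≤ β * ‖fdag (x i) - f (x i)‖ := hβ _ _
      have hhad : ‖v i‖ ^ 2 ≤ W ^ 2 * ‖u‖ ^ 2 := by
        rw [EuclideanSpace.norm_eq, EuclideanSpace.norm_eq,
          Real.sq_sqrt (by positivity), Real.sq_sqrt (by positivity), Finset.mul_sum]
        apply Finset.sum_le_sum
        intro j _
        have hwj := hwbar i j
        have h1 : ‖(v i) j‖ ^ 2 = (u j) ^ 2 * (wbar i j) ^ 2 := by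
          have : (v i) j = u j * wbar i j := by simp [hv, had, hu]
          rw [this, Real.norm_eq_abs, sq_abs]; ring
        have h2 : ‖u j‖ ^ 2 = (u j) ^ 2 := by rw [Real.norm_eq_abs, sq_abs]
        rw [h1, h2]
        have hw2 : wbar i j ^ 2 ≤ W ^ 2 := by
          nlinarith [abs_nonneg (wbar i j), sq_abs (wbar i j),
            mul_nonneg (sub_nonneg.2 hwj) (by positivity : (0:ℝ) ≤ W + |wbar i j|)]
        have := mul_le_mul_of_nonneg_left hw2 (sq_nonneg (u j))
        linarith
      have h3 : ‖u‖ ^ 2 ≤ β ^ 2 * ‖fdag (x i) - f (x i)‖ ^ 2 := by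
        have h4 := pow_le_pow_left₀ (norm_nonneg u) hgd 2
        rwa [mul_pow] at h4
      calc ‖v i‖ ^ 2 ≤ W ^ 2 * ‖u‖ ^ 2 := hhad
        _ ≤ W ^ 2 * (β ^ 2 * ‖fdag (x i) - f (x i)‖ ^ 2) :=
            mul_le_mul_of_nonneg_left h3 (by positivity)
        _ = W ^ 2 * β ^ 2 * ‖fdag (x i) - f (x i)‖ ^ 2 := by ring
    have hvsum : ∑ i, ‖v i‖ ^ 2 ≤ W ^ 2 * β ^ 2 * (2 * ((n : ℝ) * r ^ 2) / α) := by
      calc ∑ i, ‖v i‖ ^ 2 ≤ ∑ i, W ^ 2 * β ^ 2 * ‖fdag (x i) - f (x i)‖ ^ 2 :=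
            Finset.sum_le_sum fun i _ => hvnorm i
        _ = W ^ 2 * β ^ 2 * ∑ i, ‖fdag (x i) - f (x i)‖ ^ 2 := by rw [← Finset.mul_sum]
        _ ≤ _ := by
            apply mul_le_mul_of_nonneg_left hsum (by positivity)
    -- the sqrt of the v-sum is at most n * C
    have hvsum_le : ∑ i, ‖v i‖ ^ 2 ≤ ((n : ℝ) * C) ^ 2 := by
      have hnC2 : ((n : ℝ) * C) ^ 2 = 2 * W ^ 2 * β ^ 3 * (d : ℝ) * r ^ 2 * n / α ^ 2 := by
        rw [mul_pow, hC2]; field_simp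
      have hkey : β ^ 2 / α ≤ β ^ 3 * (d : ℝ) / α ^ 2 := by
        rw [div_le_div_iff₀ hα (by positivity)]
        have h1 : α ≤ β * (d : ℝ) := by nlinarith
        have h2 := mul_le_mul_of_nonneg_left h1 (mul_nonneg (sq_nonneg β) hα.le)
        nlinarith
      calc ∑ i, ‖v i‖ ^ 2 ≤ W ^ 2 * β ^ 2 * (2 * ((n : ℝ) * r ^ 2) / α) := hvsum
        _ = (2 * W ^ 2 * r ^ 2 * (n : ℝ)) * (β ^ 2 / α) := by ring
        _ ≤ (2 * W ^ 2 * r ^ 2 * (n : ℝ)) * (β ^ 3 * (d : ℝ) / α ^ 2) :=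
            mul_le_mul_of_nonneg_left hkey (by positivity)
        _ = ((n : ℝ) * C) ^ 2 := by rw [hnC2]; ring
    have hsqrt_v : Real.sqrt (∑ i, ‖v i‖ ^ 2) ≤ (n : ℝ) * C := by
      calc Real.sqrt (∑ i, ‖v i‖ ^ 2) ≤ Real.sqrt (((n : ℝ) * C) ^ 2) :=
            Real.sqrt_le_sqrt hvsum_le
        _ = (n : ℝ) * C := Real.sqrt_sq (by positivity)
    -- Cauchy-Schwarz
    have hCS : ∑ i, ⟪v i, a i - b i⟫ ≤
        Real.sqrt (∑ i, ‖v i‖ ^ 2) * Real.sqrt (∑ i, ‖a i - b i‖ ^ 2) := by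
      calc ∑ i, ⟪v i, a i - b i⟫ ≤ ∑ i, ‖v i‖ * ‖a i - b i‖ :=
            Finset.sum_le_sum fun i _ => real_inner_le_norm _ _
        _ ≤ _ := by
            have := Real.sum_mul_le_sqrt_mul_sqrt Finset.univ (fun i => ‖v i‖)
              (fun i => ‖a i - b i‖)
            simpa using this
    have hdiff : (1 / (n : ℝ)) * ∑ i, ⟪v i, a i⟫ - (1 / (n : ℝ)) * ∑ i, ⟪v i, b i⟫
        = (1 / (n : ℝ)) * ∑ i, ⟪v i, a i - b i⟫ := by
      rw [← mul_sub, ← Finset.sum_sub_distrib]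
      congr 1
      exact Finset.sum_congr rfl fun i _ => by rw [inner_sub_right]
    rw [hdiff]
    calc (1 / (n : ℝ)) * ∑ i, ⟪v i, a i - b i⟫
        ≤ (1 / (n : ℝ)) * (Real.sqrt (∑ i, ‖v i‖ ^ 2) * Real.sqrt (∑ i, ‖a i - b i‖ ^ 2)) := by
          apply mul_le_mul_of_nonneg_left hCS (by positivity)
      _ ≤ (1 / (n : ℝ)) * (((n : ℝ) * C) * Real.sqrt (∑ i, ‖a i - b i‖ ^ 2)) := by
          apply mul_le_mul_of_nonneg_left _ (by positivity)
          exact mul_le_mul_of_nonneg_right hsqrt_v (Real.sqrt_nonneg _)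
      _ = C * Real.sqrt (∑ i, ‖a i - b i‖ ^ 2) := by
          field_simp
  -- Br is nonempty
  have hdagBr : fdag ∈ Br := by
    rw [hBr]
    refine ⟨hfdagF, ?_⟩
    have h0 : empLn φ x fdag fdag = 0 := by
      unfold empLn breg
      simp
    rw [h0]; positivity
  have hne : Br.Nonempty := ⟨fdag, hdagBr⟩
  -- symmetric Frobenius norm
  have hsymm : Real.sqrt (∑ i, ‖ε' i - ε i‖ ^ 2) = Real.sqrt (∑ i, ‖ε i - ε' i‖ ^ 2) := by
    congr 1
    exact Finset.sum_congr rfl fun i _ => by rw [norm_sub_rev]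
  set Fr : ℝ := Real.sqrt (∑ i, ‖ε i - ε' i‖ ^ 2) with hFr
  have half : H ε - H ε' ≤ C * Fr := by
    rw [hH ε, hH ε', sub_le_iff_le_add]
    apply csSup_le (hne.image _)
    rintro _ ⟨f, hf, rfl⟩
    have h1 : (1 / (n : ℝ)) * ∑ i, ⟪had (gradient φ (fdag (x i)) - gradient φ (f (x i)))
        (wbar i), ε' i⟫ ≤ sSup ((fun f : X → EuclideanSpace ℝ (Fin d) =>
        (1 / (n : ℝ)) * ∑ i, ⟪had (gradient φ (fdag (x i)) - gradient φ (f (x i)))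
        (wbar i), ε' i⟫) '' Br) := le_csSup (hbdd ε') ⟨f, hf, rfl⟩
    have h2 := key f hf ε ε'
    linarith
  have half' : H ε' - H ε ≤ C * Fr := by
    rw [hH ε', hH ε, sub_le_iff_le_add]
    apply csSup_le (hne.image _)
    rintro _ ⟨f, hf, rfl⟩
    have h1 : (1 / (n : ℝ)) * ∑ i, ⟪had (gradient φ (fdag (x i)) - gradient φ (f (x i)))
        (wbar i), ε i⟫ ≤ sSup ((fun f : X → EuclideanSpace ℝ (Fin d) =>
        (1 / (n : ℝ)) * ∑ i, ⟪had (gradient φ (fdag (x i)) - gradient φ (f (x i)))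
        (wbar i), ε i⟫) '' Br) := le_csSup (hbdd ε) ⟨f, hf, rfl⟩
    have h2 := key f hf ε' ε
    rw [hsymm] at h2
    linarith
  rw [abs_sub_le_iff]
  exact ⟨half, half'⟩
end
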